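/- Sufficient conditions for Ordered Response: Fix an instance OR = ⟨v_s=1, a_1, …, a_k⟩, times t_1 ≤ t_2 ≤ … ≤ t_k, and write θ_h = ⟨i_h,t_h⟩ and θ_h^+ = ⟨i_h,t_h+1⟩. Let Q be a Nice-based Message (NbM) protocol in which, for each h ≤ k, process i_h performs action a_h at time t_h in a run r iff i_h is active at time t_h and ¬K_{i_h}¬ψ_nice holds at (r,t_h), and i_h performs a_h at no other time. Suppose nG(Q) contains: (1) an f-resilient message block from ⟨s,0⟩ to θ_h for every h ≤ k; (2) for every h < k, an (f−1)-resilient message block from θ_h^+ to θ_{h+1} none of whose paths contains a null-message edge sent by i_h; and (3) for all process-time nodes ρ_b = ⟨b,m_b⟩, indices x < h ≤ k, and sets B ⊆ ℙ with b ∈ B and |B| ≤ f: if nG(Q) contains a path from ρ_b to θ_x whose first edge is an actual-message edge and which contains no null-message edge sent by b, and there is no B null free path from θ_x to θ_h in nG(Q), then nG(Q) contains a B null free path from ⟨b,m_b+1⟩ to θ_h. Then Q solves OR. -/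

import Mathlib

namespace NullMessages

/-- Global parameters of the synchronous crash-failure model `γ^f`:
`N > 2` processes (`Fin N`), a source `s`, a destination `d`, a directed
communication network `chan`, a bound `f` on the number of crashes per run,
and fixed initial values `vOther` for the processes other than `s`. -/
structure Params where
  N : ℕ
  N_gt : 2 < N
  s : Fin N
  d : Fin N
  sd_ne : s ≠ d
  chan : Fin N → Fin N → Bool
  f : ℕ
  vOther : Fin N → Bool

/-- A failure pattern: `fp q = some (t, Bl)` says that `q` crashes at time `t`,
and in its crash round its message to `p` is sent iff `p ∉ Bl`.
At most `f` processes fail. -/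
structure FPat (P : Params) where
  fp : Fin P.N → Option (ℕ × Finset (Fin P.N))
  card_le : (Finset.univ.filter fun q => (fp q).isSome).card ≤ P.f

/-- The set of processes that fail in a failure pattern. -/
def FPat.F {P : Params} (FP : FPat P) : Finset (Fin P.N) :=
  Finset.univ.filter fun q => (FP.fp q).isSome

/-- A run of a (deterministic) protocol is uniquely determined by the
initial value `v_s` of the source and a failure pattern. -/
abbrev Run (P : Params) := Bool × FPat P

/-- Process-time nodes `⟨p,t⟩`. -/
abbrev Node (P : Params) := Fin P.N × ℕ

/-- An event observed by a process in one round: the messages it sent and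
the messages it received (indexed by the other endpoint of the channel). -/
structure Event (P : Params) (Msg : Type) where
  sent : Fin P.N → Option Msg
  rcvd : Fin P.N → Option Msg

/-- A local state: the process's initial value together with the sequence of
events it has observed so far (the current time is the length of that list). -/
abbrev LState (P : Params) (Msg : Type) := Bool × List (Event P Msg)

/-- A deterministic protocol: as a function of the local state, which message
(if any) to send to each process, and which actions (named by `ℕ`) to perform. -/
structure Protocol (P : Params) (Msg : Type) where
  send : LState P Msg → Fin P.N → Option Msg
  act : LState P Msg → Set ℕ

/-- The initial value of process `p` when the source's value is `b`. -/
def initVal (P : Params) (b : Bool) (p : Fin P.N) : Bool :=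
  if p = P.s then b else P.vOther p

/-- The message actually sent from `i` to `j` at time `t` (i.e. in round `t+1`)
in run `r`, given the local states `σ` at time `t`: the prescribed message,
except that a process sends nothing after its crash time, and at its crash time
its message to `j` is suppressed iff `j` is in its blocked set. -/
def sendRound (P : Params) {Msg : Type} (Q : Protocol P Msg) (r : Run P)
    (σ : Fin P.N → LState P Msg) (t : ℕ) (i j : Fin P.N) : Option Msg :=
  if P.chan i j then
    match r.2.fp i with
    | none => Q.send (σ i) j
    | some x =>
        if t < x.1 then Q.send (σ i) j
        else if t = x.1 then (if j ∈ x.2 then none else Q.send (σ i) j)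
        else none
  else none

/-- One synchronous step of process `p`'s local state. -/
def stepState (P : Params) {Msg : Type} (Q : Protocol P Msg) (r : Run P)
    (σ : Fin P.N → LState P Msg) (t : ℕ) (p : Fin P.N) : LState P Msg :=
  ((σ p).1,
    (σ p).2 ++ [⟨fun j => sendRound P Q r σ t p j, fun j => sendRound P Q r σ t j p⟩])

/-- The local state `r_p(t)` of each process `p` at each time `t` in run `r`
of protocol `Q`.  A crashed process is inactive (its state is frozen) from the
round after its crash on. -/
def stateAt (P : Params) {Msg : Type} (Q : Protocol P Msg) (r : Run P) :
    ℕ → Fin P.N → LState P Msg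
  | 0 => fun p => (initVal P r.1 p, [])
  | t + 1 => fun p =>
      let σ := stateAt P Q r t
      match r.2.fp p with
      | some x => if x.1 ≤ t then σ p else stepState P Q r σ t p
      | none => stepState P Q r σ t p

/-- The message (if any) actually sent from `i` to `j` at time `t` in run `r`. -/
def msgSent (P : Params) {Msg : Type} (Q : Protocol P Msg) (r : Run P)
    (i j : Fin P.N) (t : ℕ) : Option Msg :=
  sendRound P Q r (stateAt P Q r t) t i j

/-- `i` sends an actual message to `j` at `(r,t)`. -/
def SendsActual (P : Params) {Msg : Type} (Q : Protocol P Msg) (r : Run P)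
    (i j : Fin P.N) (t : ℕ) : Prop :=
  (msgSent P Q r i j t).isSome

/-- The channel from `i` to `j` is blocked at `(r,t)`: `i` fails at some time
`t' < t`, or at time `t' = t` with `j` in its blocked set. -/
def BlockedAt (P : Params) (r : Run P) (i j : Fin P.N) (t : ℕ) : Prop :=
  ∃ x ∈ r.2.fp i, x.1 < t ∨ (x.1 = t ∧ j ∈ x.2)

/-- `i` sends `j` a *null message* at `(r,t)`: the channel is not blocked,
`i` sends no actual message to `j` at `(r,t)`, and in some run `r'` of the
same protocol `i` does send `j` an actual message at time `t`. -/
def SendsNull (P : Params) {Msg : Type} (Q : Protocol P Msg) (r : Run P)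
    (i j : Fin P.N) (t : ℕ) : Prop :=
  ¬ BlockedAt P r i j t ∧ ¬ SendsActual P Q r i j t ∧
    ∃ r' : Run P, SendsActual P Q r' i j t

/-- `i` sends `j` an actual message or a null message at `(r,t)`. -/
def SendsE (P : Params) {Msg : Type} (Q : Protocol P Msg) (r : Run P)
    (i j : Fin P.N) (t : ℕ) : Prop :=
  SendsActual P Q r i j t ∨ SendsNull P Q r i j t

/-- An *enhanced message chain* `θ ⇝ θ'` in run `r`: processes
`p = i₁, …, i_k = q` and times `t ≤ t₁ < ⋯ < t_k = t'` such that each `i_h`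
sends an actual or null message to `i_{h+1}` at `(r,t_h)`. -/
inductive Chain (P : Params) {Msg : Type} (Q : Protocol P Msg) (r : Run P) :
    Node P → Node P → Prop
  | wait {p : Fin P.N} {t t' : ℕ} (h : t ≤ t') : Chain P Q r (p, t) (p, t')
  | step {p j q : Fin P.N} {t u t' : ℕ} (h1 : t ≤ u) (h2 : SendsE P Q r p j u)
      (h3 : Chain P Q r (j, u + 1) (q, t')) : Chain P Q r (p, t) (q, t')

/-- Knowledge: `K_i φ` holds at `(r,m)` iff `φ` holds at `(r',m)` for every run
`r'` of the protocol that is indistinguishable from `r` to `i` at time `m`. -/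
def Kn (P : Params) {Msg : Type} (Q : Protocol P Msg) (i : Fin P.N)
    (φ : Run P → ℕ → Prop) (r : Run P) (m : ℕ) : Prop :=
  ∀ r' : Run P, stateAt P Q r' m i = stateAt P Q r m i → φ r' m

/-- Process `i` performs action `α` at time `m` in run `r`: the protocol
prescribes `α` in `i`'s current local state and `i` has not yet reached its
crash round (a crashing process performs no actions in its crash round). -/
def Performs (P : Params) {Msg : Type} (Q : Protocol P Msg) (r : Run P)
    (i : Fin P.N) (α : ℕ) (m : ℕ) : Prop :=
  (∀ x ∈ r.2.fp i, m < x.1) ∧ α ∈ Q.act (stateAt P Q r m i)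

/-- Local edges of the communication graph. -/
def El (P : Params) (u v : Node P) : Prop := v.1 = u.1 ∧ v.2 = u.2 + 1

/-- Actual-message edges of the communication graph `CG_Q(r)`. -/
def Ea (P : Params) {Msg : Type} (Q : Protocol P Msg) (r : Run P)
    (u v : Node P) : Prop :=
  SendsActual P Q r u.1 v.1 u.2 ∧ v.2 = u.2 + 1

/-- Null-message edges of the communication graph `CG_Q(r)`. -/
def En (P : Params) {Msg : Type} (Q : Protocol P Msg) (r : Run P)
    (u v : Node P) : Prop :=
  SendsNull P Q r u.1 v.1 u.2 ∧ v.2 = u.2 + 1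

/-- Edges of the communication graph `CG_Q(r)`. -/
def Edge (P : Params) {Msg : Type} (Q : Protocol P Msg) (r : Run P)
    (u v : Node P) : Prop :=
  El P u v ∨ Ea P Q r u v ∨ En P Q r u v

/-- `π` is a path from `θ` to `θ'` in the communication graph `CG_Q(r)`. -/
def IsPath (P : Params) {Msg : Type} (Q : Protocol P Msg) (r : Run P)
    (π : List (Node P)) (θ θ' : Node P) : Prop :=
  π.head? = some θ ∧ π.getLast? = some θ' ∧ π.Chain' (Edge P Q r)

/-- `π` is a *B null free* path: each of its edges is a local edge, an
actual-message edge, or a null-message edge whose sender is not in `B`. -/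
def BNullFree (P : Params) {Msg : Type} (Q : Protocol P Msg) (r : Run P)
    (B : Set (Fin P.N)) (π : List (Node P)) : Prop :=
  π.Chain' fun u v => El P u v ∨ Ea P Q r u v ∨ (En P Q r u v ∧ u.1 ∉ B)

/-- `π` is an actual message chain (a path using only local and
actual-message edges) from `θ` to `θ'` in `CG_Q(r)`. -/
def IsActualPath (P : Params) {Msg : Type} (Q : Protocol P Msg) (r : Run P)
    (π : List (Node P)) (θ θ' : Node P) : Prop :=
  π.head? = some θ ∧ π.getLast? = some θ' ∧
    π.Chain' fun u v => El P u v ∨ Ea P Q r u v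

/-- There is an actual message chain from `θ` to `θ'` in `r`. -/
def ActualChain (P : Params) {Msg : Type} (Q : Protocol P Msg) (r : Run P)
    (θ θ' : Node P) : Prop :=
  ∃ π : List (Node P), IsActualPath P Q r π θ θ'

/-- An *n-resilient message block* from `θ` to `θ'` in `CG_Q(r)`: a set `Γ` of
paths from `θ` to `θ'` such that for every set `B` of at most `n` processes,
`Γ` contains a `B` null free path. -/
def ResBlockN (P : Params) {Msg : Type} (Q : Protocol P Msg) (r : Run P)
    (n : ℕ) (θ θ' : Node P) (Γ : Set (List (Node P))) : Prop :=
  (∀ π ∈ Γ, IsPath P Q r π θ θ') ∧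
    ∀ B : Finset (Fin P.N), B.card ≤ n → ∃ π ∈ Γ, BNullFree P Q r (↑B) π

/-- An *(f/failed)-resilient message block* from `θ` to `θ'` in `CG_Q(r)`:
a set `Γ` of paths from `θ` to `θ'` such that for every set `B` of processes
with `|B ∪ 𝔽^r| ≤ f`, `Γ` contains a `B` null free path. -/
def ResBlockFFailed (P : Params) {Msg : Type} (Q : Protocol P Msg) (r : Run P)
    (θ θ' : Node P) (Γ : Set (List (Node P))) : Prop :=
  (∀ π ∈ Γ, IsPath P Q r π θ θ') ∧
    ∀ B : Finset (Fin P.N), (B ∪ r.2.F).card ≤ P.f →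
      ∃ π ∈ Γ, BNullFree P Q r (↑B) π

/-- The empty failure pattern. -/
def nicePat (P : Params) : FPat P :=
  ⟨fun _ => none, by simp⟩

/-- The *nice run* `r̂(Q)`: `v_s = 1` and no process fails. -/
def niceRun (P : Params) : Run P := (true, nicePat P)

/-- `i` sends a null message to `j` at time `t` *in case* `φ`: in every run in
which the channel from `i` to `j` is not blocked at time `t`, `i` sends `j` a
null message at time `t` iff `φ` holds there. -/
def NullInCase (P : Params) {Msg : Type} (Q : Protocol P Msg)
    (i j : Fin P.N) (t : ℕ) (φ : Run P → ℕ → Prop) : Prop :=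
  ∀ r : Run P, ¬ BlockedAt P r i j t → (SendsNull P Q r i j t ↔ φ r t)

/-- A *Nice-based Message (NbM)* protocol: all actual messages are single-bit;
a process sends '0' (`false`) iff it knows the run is not nice and '1' (`true`)
otherwise; and every null message is a null message in case the sender does not
know that the run is not nice. -/
def NbM (P : Params) (Q : Protocol P Bool) : Prop :=
  (∀ (r : Run P) (i j : Fin P.N) (t : ℕ) (b : Bool),
      msgSent P Q r i j t = some b →
        (b = false ↔ Kn P Q i (fun r' _ => r' ≠ niceRun P) r t)) ∧
  (∀ (i j : Fin P.N) (t : ℕ), (∃ r : Run P, SendsNull P Q r i j t) →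
      NullInCase P Q i j t fun r' u =>
        ¬ Kn P Q i (fun r'' _ => r'' ≠ niceRun P) r' u)

/-- The fact `v_s ≠ 1 ∨ s is faulty`. -/
def BadFact (P : Params) : Run P → ℕ → Prop :=
  fun r' _ => r'.1 ≠ true ∨ (r'.2.fp P.s).isSome

/-- A *Robust-based Message (RbM)* protocol: all actual messages are single-bit;
a process sends '0' (`false`) iff it knows `v_s ≠ 1 ∨ s is faulty` and '1'
(`true`) otherwise; every null message is a null message in case the sender
does not know `v_s ≠ 1 ∨ s is faulty`; and every actual message of the nice
run is also sent in any run in which the corresponding channel is unblocked. -/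
def RbM (P : Params) (Q : Protocol P Bool) : Prop :=
  (∀ (r : Run P) (i j : Fin P.N) (t : ℕ) (b : Bool),
      msgSent P Q r i j t = some b → (b = false ↔ Kn P Q i (BadFact P) r t)) ∧
  (∀ (i j : Fin P.N) (t : ℕ), (∃ r : Run P, SendsNull P Q r i j t) →
      NullInCase P Q i j t fun r' u => ¬ Kn P Q i (BadFact P) r' u) ∧
  (∀ (r : Run P) (t : ℕ) (p q : Fin P.N),
      SendsActual P Q (niceRun P) p q t → ¬ BlockedAt P r p q t →
        SendsActual P Q r p q t)

/-- Action `α` of process `i` has (already) been performed by time `t` in `r`. -/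
def PerformedBy (P : Params) {Msg : Type} (Q : Protocol P Msg) (r : Run P)
    (i : Fin P.N) (α : ℕ) (t : ℕ) : Prop :=
  ∃ u ≤ t, Performs P Q r i α u

/-- `Q` is consistent with the Ordered Response instance
`⟨v_s = 1, a_1, …, a_k⟩` (action `a h` is assigned to process `ip h`):
`a h` is performed only if `v_s = 1` and all earlier actions have been
performed. -/
def ConsistentOR (P : Params) {Msg : Type} (Q : Protocol P Msg) {k : ℕ}
    (ip : Fin k → Fin P.N) (a : Fin k → ℕ) : Prop :=
  ∀ (r : Run P) (h : Fin k) (t : ℕ), Performs P Q r (ip h) (a h) t →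
    r.1 = true ∧ ∀ g : Fin k, g < h → PerformedBy P Q r (ip g) (a g) t

/-- `Q` solves the Ordered Response instance: it is consistent with it and all
the actions are performed in `Q`'s nice run. -/
def SolvesOR (P : Params) {Msg : Type} (Q : Protocol P Msg) {k : ℕ}
    (ip : Fin k → Fin P.N) (a : Fin k → ℕ) : Prop :=
  ConsistentOR P Q ip a ∧
    ∀ h : Fin k, ∃ t : ℕ, Performs P Q (niceRun P) (ip h) (a h) t

/-- `Q` solves Robust Information Transfer between `s` and `d`: in every run in
which `v_s = 1` and `s` does not fail, eventually `d` knows that `v_s = 1`. -/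
def SolvesRobustIT (P : Params) {Msg : Type} (Q : Protocol P Msg) : Prop :=
  ∀ r : Run P, r.1 = true → r.2.fp P.s = none →
    ∃ m : ℕ, Kn P Q P.d (fun r' _ => r'.1 = true) r m

/-- Process `p` occurs as the sender of an actual or null message on path `π`. -/
def SendsOn (P : Params) {Msg : Type} (Q : Protocol P Msg) (r : Run P)
    (π : List (Node P)) (p : Fin P.N) : Prop :=
  ∃ e ∈ π.zip π.tail, e.1.1 = p ∧ (Ea P Q r e.1 e.2 ∨ En P Q r e.1 e.2)

/-- The failure pattern `FP` is compatible with the run `r` (of protocol `Q`):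
exactly the processes of `FP` fail in `r`, at the times `FP` specifies, and in
the crash round of a failing process `q`, the message prescribed by `Q` from
`q` to `p` is sent iff `p` is not in `q`'s blocked set. -/
def Compatible (P : Params) {Msg : Type} (Q : Protocol P Msg) (r : Run P)
    (FP : FPat P) : Prop :=
  (∀ q : Fin P.N, (FP.fp q).isSome ↔ (r.2.fp q).isSome) ∧
  (∀ q : Fin P.N, ∀ x ∈ FP.fp q, ∀ y ∈ r.2.fp q, x.1 = y.1) ∧
  (∀ q : Fin P.N, ∀ x ∈ FP.fp q, ∀ p : Fin P.N,
    (P.chan q p = true ∧ (Q.send (stateAt P Q r x.1 q) p).isSome) →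
      ((msgSent P Q r q p x.1).isSome ↔ p ∉ x.2))

/-- `FP'` is *harsher* than `FP` (written `FP' ≤ FP`): every process failing in
`FP` fails in `FP'`, either strictly earlier or at the same time with a larger
blocked set. -/
def Harsher (P : Params) (FP' FP : FPat P) : Prop :=
  (∀ q : Fin P.N, (FP.fp q).isSome → (FP'.fp q).isSome) ∧
  ∀ q : Fin P.N, ∀ x ∈ FP.fp q, ∀ x' ∈ FP'.fp q,
    x'.1 < x.1 ∨ (x'.1 = x.1 ∧ x.2 ⊆ x'.2)

/-- `FP` is the minimal failure pattern w.r.t. `r`: it is compatible with `r`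
and every compatible pattern of which it is a harsher variant equals it. -/
def MinimalFP (P : Params) {Msg : Type} (Q : Protocol P Msg) (r : Run P)
    (FP : FPat P) : Prop :=
  Compatible P Q r FP ∧
    ∀ FP' : FPat P, Compatible P Q r FP' → Harsher P FP FP' → FP' = FP

/-! ### Auxiliary machinery for the sufficiency proof -/

section Aux

variable {P : Params} {Msg : Type} {Q : Protocol P Msg}

/-- `i`'s state at `(r,m)` differs from its state in the nice run
("`i` is contaminated", equivalently `i` knows the run is not nice). -/
def Cont (P : Params) {Msg : Type} (Q : Protocol P Msg) (r : Run P)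
    (i : Fin P.N) (m : ℕ) : Prop :=
  stateAt P Q r m i ≠ stateAt P Q (niceRun P) m i

lemma nice_fp (p : Fin P.N) : (niceRun P).2.fp p = none := rfl

lemma nice_not_blocked (i j : Fin P.N) (t : ℕ) :
    ¬ BlockedAt P (niceRun P) i j t := by
  rintro ⟨x, hx, -⟩; simp [nice_fp] at hx

lemma stateAt_succ (r : Run P) (t : ℕ) (p : Fin P.N) :
    stateAt P Q r (t+1) p =
      match r.2.fp p with
      | some x => if x.1 ≤ t then stateAt P Q r t p
                  else stepState P Q r (stateAt P Q r t) t p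
      | none => stepState P Q r (stateAt P Q r t) t p := rfl

lemma stateAt_succ_frozen {r : Run P} {p : Fin P.N} {x : ℕ × Finset (Fin P.N)}
    (h : r.2.fp p = some x) {t : ℕ} (hx : x.1 ≤ t) :
    stateAt P Q r (t+1) p = stateAt P Q r t p := by
  rw [stateAt_succ, h]; simp [hx]

lemma stateAt_succ_active {r : Run P} {p : Fin P.N} {t : ℕ}
    (h : ∀ x ∈ r.2.fp p, t < x.1) :
    stateAt P Q r (t+1) p = stepState P Q r (stateAt P Q r t) t p := by
  rw [stateAt_succ]
  cases hfp : r.2.fp p with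
  | none => rfl
  | some x =>
      have := h x (by simp [hfp])
      simp [Nat.not_le.2 this]

lemma stateAt_nice_succ (t : ℕ) (p : Fin P.N) :
    stateAt P Q (niceRun P) (t+1) p =
      stepState P Q (niceRun P) (stateAt P Q (niceRun P) t) t p := rfl

lemma len_le (r : Run P) : ∀ (m : ℕ) (p : Fin P.N),
    (stateAt P Q r m p).2.length ≤ m := by
  intro m
  induction m with
  | zero => intro p; simp [stateAt]
  | succ n ih =>
      intro p
      rw [stateAt_succ]
      cases hfp : r.2.fp p with
      | none => simp [stepState]; exact ih p
      | some x =>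
          by_cases hx : x.1 ≤ n
          · simp [hx]; exact (ih p).trans (Nat.le_succ n)
          · simp [hx, stepState]; exact ih p

lemma len_nice : ∀ (m : ℕ) (p : Fin P.N),
    (stateAt P Q (niceRun P) m p).2.length = m := by
  intro m
  induction m with
  | zero => intro p; simp [stateAt]
  | succ n ih => intro p; rw [stateAt_nice_succ]; simp [stepState, ih p]

lemma cont_of_frozen {r : Run P} {p : Fin P.N} {x : ℕ × Finset (Fin P.N)}
    (h : r.2.fp p = some x) {m : ℕ} (hx : x.1 ≤ m) :
    Cont P Q r p (m+1) := by
  intro he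
  have hlen := congrArg (fun s : LState P Msg => s.2.length) he
  simp only [stateAt_succ_frozen h hx, len_nice] at hlen
  have := len_le (Q := Q) r m p
  omega

lemma kn_iff_cont (r : Run P) (i : Fin P.N) (m : ℕ) :
    Kn P Q i (fun r'' _ => r'' ≠ niceRun P) r m ↔ Cont P Q r i m := by
  constructor
  · intro hK
    by_contra hc
    have heq : ¬ Cont P Q r i m := hc
    have : stateAt P Q r m i = stateAt P Q (niceRun P) m i := not_not.1 hc
    exact hK (niceRun P) this.symm rfl
  · intro hc r' hst he
    subst he
    exact hc hst.symm

lemma kn_nice_false (i : Fin P.N) (m : ℕ) :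
    ¬ Kn P Q i (fun r'' _ => r'' ≠ niceRun P) (niceRun P) m := by
  intro h; exact h (niceRun P) rfl rfl

/-- Decomposition of state equality at a successor time. -/
lemma eq_succ_elim {r : Run P} {p : Fin P.N} {m : ℕ}
    (he : stateAt P Q r (m+1) p = stateAt P Q (niceRun P) (m+1) p) :
    stateAt P Q r m p = stateAt P Q (niceRun P) m p ∧
    (∀ j, msgSent P Q r p j m = msgSent P Q (niceRun P) p j m) ∧
    (∀ j, msgSent P Q r j p m = msgSent P Q (niceRun P) j p m) := by
  have hactive : ∀ x ∈ r.2.fp p, m < x.1 := by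
    intro x hx
    by_contra hlt
    exact cont_of_frozen hx (Nat.not_lt.1 hlt) he
  rw [stateAt_succ_active hactive, stateAt_nice_succ] at he
  unfold stepState at he
  rw [Prod.mk.injEq] at he
  obtain ⟨h1, h2⟩ := he
  have hlen : (stateAt P Q r m p).2.length = (stateAt P Q (niceRun P) m p).2.length := by
    have := congrArg List.length h2
    simp at this; omega
  obtain ⟨hli, hev⟩ := List.append_inj h2 hlen
  have hev' := List.head_eq_of_cons_eq hev
  have hsent : ∀ j, msgSent P Q r p j m = msgSent P Q (niceRun P) p j m := by
    intro j
    have := congrArg (fun e : Event P Msg => e.sent j) hev'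
    exact this
  have hrcvd : ∀ j, msgSent P Q r j p m = msgSent P Q (niceRun P) j p m := by
    intro j
    have := congrArg (fun e : Event P Msg => e.rcvd j) hev'
    exact this
  exact ⟨Prod.ext h1 hli, hsent, hrcvd⟩

lemma cont_local {r : Run P} {p : Fin P.N} {m : ℕ} (h : Cont P Q r p m) :
    Cont P Q r p (m+1) := by
  intro he
  exact h (eq_succ_elim he).1

lemma cont_msg {r : Run P} {j p : Fin P.N} {m : ℕ}
    (h : msgSent P Q r j p m ≠ msgSent P Q (niceRun P) j p m) :
    Cont P Q r p (m+1) := by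
  intro he
  exact h ((eq_succ_elim he).2.2 j)

end Aux

section Aux2

variable {P : Params} {Q : Protocol P Bool}

/-- Every actual message of the nice run of an NbM protocol is `true`. -/
lemma nice_msg_true (hN : NbM P Q) {i j : Fin P.N} {t : ℕ} {b : Bool}
    (h : msgSent P Q (niceRun P) i j t = some b) : b = true := by
  have := (hN.1 (niceRun P) i j t b h)
  rcases Bool.eq_false_or_eq_true b with hb | hb
  · exact hb
  · exact absurd (this.1 hb) (kn_nice_false i t)

/-- Forward contamination step along a single suitable edge of `nG(Q)`. -/
lemma stepFwd (hN : NbM P Q) {r : Run P} {S : Set (Fin P.N)}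
    (hS : ∀ p : Fin P.N, p ∉ S → r.2.fp p = none) {u v : Node P}
    (hedge : El P u v ∨ Ea P Q (niceRun P) u v ∨
      (En P Q (niceRun P) u v ∧ u.1 ∉ S))
    (hc : Cont P Q r u.1 u.2) : Cont P Q r v.1 v.2 := by
  rcases hedge with ⟨h1, h2⟩ | hEa | ⟨hEn, hnS⟩
  · rw [h1, h2]; exact cont_local hc
  · obtain ⟨hact, h2⟩ := hEa
    rw [h2]
    apply cont_msg (j := u.1)
    obtain ⟨b, hb⟩ := Option.isSome_iff_exists.1 hact
    rw [hb, nice_msg_true hN hb]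
    cases hm : msgSent P Q r u.1 v.1 u.2 with
    | none => simp
    | some b' =>
        have := (hN.1 r u.1 v.1 u.2 b' hm).2 ((kn_iff_cont r u.1 u.2).2 hc)
        simp [this]
  · obtain ⟨hnull, h2⟩ := hEn
    rw [h2]
    apply cont_msg (j := u.1)
    have hfp : r.2.fp u.1 = none := hS u.1 hnS
    have hnb : ¬ BlockedAt P r u.1 v.1 u.2 := by
      rintro ⟨x, hx, -⟩; simp [hfp] at hx
    have hnic := hN.2 u.1 v.1 u.2 ⟨niceRun P, hnull⟩ r hnb
    have hKn := (kn_iff_cont r u.1 u.2).2 hc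
    have hnsn : ¬ SendsNull P Q r u.1 v.1 u.2 := fun hsn =>
      (hnic.1 hsn) hKn
    have hsa : SendsActual P Q r u.1 v.1 u.2 := by
      by_contra hna
      exact hnsn ⟨hnb, hna, hnull.2.2⟩
    have hMn : msgSent P Q (niceRun P) u.1 v.1 u.2 = none :=
      Option.not_isSome_iff_eq_none.1 hnull.2.1
    rw [hMn]
    exact Option.isSome_iff_ne_none.1 hsa

lemma chain'_and {α : Type*} {R S : α → α → Prop} {l : List α}
    (hR : l.Chain' R) (hS : l.Chain' S) :
    l.Chain' fun a b => R a b ∧ S a b := by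
  unfold List.Chain' at *
  rw [List.isChain_iff_getElem] at *
  exact fun i h => ⟨hR i h, hS i h⟩

/-- Forward contamination propagation along a path all of whose null-message
edges have senders outside `S`, where all processes outside `S` are correct. -/
lemma forward (hN : NbM P Q) {r : Run P} {S : Set (Fin P.N)}
    (hS : ∀ p : Fin P.N, p ∉ S → r.2.fp p = none) :
    ∀ (π : List (Node P)) (θ θ' : Node P),
      π.Chain' (fun u v => El P u v ∨ Ea P Q (niceRun P) u v ∨
        (En P Q (niceRun P) u v ∧ u.1 ∉ S)) →
      π.head? = some θ → π.getLast? = some θ' →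
      Cont P Q r θ.1 θ.2 → Cont P Q r θ'.1 θ'.2 := by
  intro π
  induction π with
  | nil => intro θ θ' _ h; simp at h
  | cons a l ih =>
      intro θ θ' hch hhd hlast hc
      have ha : θ = a := by simpa using hhd.symm
      subst ha
      cases l with
      | nil => simp at hlast; rw [← hlast]; exact hc
      | cons b l' =>
          unfold List.Chain' at hch; rw [List.isChain_cons_cons] at hch
          have hb := stepFwd hN hS hch.1 hc
          have hlast' : (b :: l').getLast? = some θ' := by
            rw [← hlast]; simp [List.getLast?_cons_cons]
          exact ih b θ' hch.2 rfl hlast' hb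

/-- The same, for a `B` null free path with `↑𝔽^r ⊆ ↑B`. -/
lemma forwardB (hN : NbM P Q) {r : Run P} {B : Set (Fin P.N)}
    (hB : ∀ p : Fin P.N, p ∉ B → r.2.fp p = none)
    {π : List (Node P)} {θ θ' : Node P}
    (hp : IsPath P Q (niceRun P) π θ θ')
    (hbnf : BNullFree P Q (niceRun P) B π)
    (hc : Cont P Q r θ.1 θ.2) : Cont P Q r θ'.1 θ'.2 :=
  forward hN hB π θ θ' hbnf hp.1 hp.2.1 hc

lemma edge_time {r : Run P} {Msg : Type} {Q' : Protocol P Msg} {u v : Node P}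
    (h : Edge P Q' r u v) : v.2 = u.2 + 1 := by
  rcases h with ⟨-, h⟩ | ⟨-, h⟩ | ⟨-, h⟩ <;> exact h

lemma last_time_ge {Msg : Type} {Q' : Protocol P Msg} {r : Run P} :
    ∀ (l : List (Node P)) (a θ' : Node P),
      (a :: l).Chain' (Edge P Q' r) → (a :: l).getLast? = some θ' →
      a.2 ≤ θ'.2 := by
  intro l
  induction l with
  | nil => intro a θ' _ h; simp at h; rw [h]
  | cons b l' ih =>
      intro a θ' hch hlast
      unfold List.Chain' at hch; rw [List.isChain_cons_cons] at hch
      have h1 := edge_time hch.1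
      have h2 := ih b θ' hch.2 (by rw [← hlast]; simp [List.getLast?_cons_cons])
      omega

/-- A path with at least one edge strictly increases time. -/
lemma path_time_lt {Msg : Type} {Q' : Protocol P Msg} {r : Run P}
    {a v θ' : Node P} {rest : List (Node P)}
    (hp : IsPath P Q' r (a :: v :: rest) a θ') : a.2 < θ'.2 := by
  obtain ⟨-, hlast, hch⟩ := hp
  unfold List.Chain' at hch; rw [List.isChain_cons_cons] at hch
  have h1 := edge_time hch.1
  have h2 := last_time_ge (rest) v θ' hch.2
    (by rw [← hlast]; simp [List.getLast?_cons_cons])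
  omega

lemma isPath_append {Msg : Type} {Q' : Protocol P Msg} {r : Run P}
    {π : List (Node P)} {θ θ₁ w : Node P}
    (hp : IsPath P Q' r π θ θ₁) (he : Edge P Q' r θ₁ w) :
    IsPath P Q' r (π ++ [w]) θ w := by
  obtain ⟨hhd, hlast, hch⟩ := hp
  have hne : π ≠ [] := by rintro rfl; simp at hhd
  refine ⟨?_, ?_, ?_⟩
  · rw [List.head?_append_of_ne_nil _ hne]; exact hhd
  · simp
  · unfold List.Chain'; rw [List.isChain_append]
    refine ⟨hch, List.isChain_singleton w, ?_⟩
    intro x hx y hy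
    simp at hy
    subst hy
    rw [hlast] at hx
    simp at hx
    subst hx
    exact he

lemma bnf_append {Msg : Type} {Q' : Protocol P Msg} {r : Run P}
    {B : Set (Fin P.N)} {π : List (Node P)} {θ₁ w : Node P}
    (hb : BNullFree P Q' r B π) (hlast : π.getLast? = some θ₁)
    (he : El P θ₁ w ∨ Ea P Q' r θ₁ w ∨ (En P Q' r θ₁ w ∧ θ₁.1 ∉ B)) :
    BNullFree P Q' r B (π ++ [w]) := by
  unfold BNullFree at *
  unfold List.Chain'; rw [List.isChain_append]
  refine ⟨hb, List.isChain_singleton w, ?_⟩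
  intro x hx y hy
  simp at hy
  subst hy
  rw [hlast] at hx
  simp at hx
  subst hx
  exact he

/-- An uncontaminated process that is still active sends the same messages
as in the nice run. -/
lemma sent_eq_of_active {r : Run P} {q : Fin P.N} {m : ℕ}
    (hactive : ∀ x ∈ r.2.fp q, m < x.1)
    (heq : stateAt P Q r m q = stateAt P Q (niceRun P) m q) (j : Fin P.N) :
    msgSent P Q r q j m = msgSent P Q (niceRun P) q j m := by
  unfold msgSent sendRound
  rw [heq]
  cases hfp : r.2.fp q with
  | none => simp [nice_fp]
  | some x =>
      have hx := hactive x (by simp [hfp])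
      simp [nice_fp, hx]

/-- The shape of the origin produced by the backward trace. -/
def OriginTo (P : Params) (Q : Protocol P Bool) (r : Run P)
    (θ : Node P) : Prop :=
  ∃ (b : Fin P.N) (u : ℕ) (x : ℕ × Finset (Fin P.N)),
    r.2.fp b = some x ∧ x.1 ≤ u ∧
    ∃ (v : Node P) (rest : List (Node P)),
      IsPath P Q (niceRun P) ((b,u) :: v :: rest) (b,u) θ ∧
      Ea P Q (niceRun P) (b,u) v ∧
      BNullFree P Q (niceRun P) {b} ((b,u) :: v :: rest)

/-- Two-node origin: a blocked nice-actual message from a failed process. -/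
lemma origin2 {r : Run P} {p q : Fin P.N} {m : ℕ} {x : ℕ × Finset (Fin P.N)}
    (hfp : r.2.fp p = some x) (hxle : x.1 ≤ m)
    (hMn : (msgSent P Q (niceRun P) p q m).isSome) :
    OriginTo P Q r (q, m+1) := by
  refine ⟨p, m, x, hfp, hxle, (q, m+1), [], ⟨rfl, by simp, ?_⟩, ⟨hMn, rfl⟩, ?_⟩
  · exact List.isChain_cons_cons.2 ⟨Or.inr (Or.inl ⟨hMn, rfl⟩), List.isChain_singleton _⟩
  · exact List.isChain_cons_cons.2 ⟨Or.inr (Or.inl ⟨hMn, rfl⟩), List.isChain_singleton _⟩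

lemma trace {r : Run P} (hr : r.1 = true) :
    ∀ (m : ℕ) (q : Fin P.N), Cont P Q r q m →
      (∃ x ∈ r.2.fp q, x.1 < m) ∨ OriginTo P Q r (q, m) := by
  intro m
  induction m with
  | zero =>
      intro q hc
      exfalso
      apply hc
      show (initVal P r.1 q, []) = (initVal P (niceRun P).1 q, [])
      rw [hr]; rfl
  | succ m ih =>
      intro q hc
      by_cases hfr : ∃ x ∈ r.2.fp q, x.1 ≤ m
      · obtain ⟨x, hx, hxm⟩ := hfr
        exact Or.inl ⟨x, hx, by omega⟩
      · have hactive : ∀ x ∈ r.2.fp q, m < x.1 := by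
          push_neg at hfr
          exact hfr
        by_cases hcq : Cont P Q r q m
        · rcases ih q hcq with ⟨x, hx, hxm⟩ | ⟨b, u, x, hfb, hxu, v, rest, hpath, hEa, hbnf⟩
          · exact Or.inl ⟨x, hx, by omega⟩
          · refine Or.inr ⟨b, u, x, hfb, hxu, v, rest ++ [(q, m+1)], ?_, hEa, ?_⟩
            · have := isPath_append hpath
                (Or.inl ⟨rfl, rfl⟩ : Edge P Q (niceRun P) (q, m) (q, m+1))
              simpa using this
            · have := bnf_append (w := (q, m+1)) hbnf hpath.2.1
                (Or.inl ⟨rfl, rfl⟩ : El P (q,m) (q,m+1) ∨ _ ∨ _)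
              simpa using this
        · -- q's state at m agrees with nice; a received message must differ
          have heq : stateAt P Q r m q = stateAt P Q (niceRun P) m q :=
            not_not.1 hcq
          have hrcvd : ∃ p, msgSent P Q r p q m ≠ msgSent P Q (niceRun P) p q m := by
            by_contra hall
            push_neg at hall
            apply hc
            rw [stateAt_succ_active hactive, stateAt_nice_succ]
            unfold stepState
            have e1 : (fun j => sendRound P Q r (stateAt P Q r m) m q j) =
                (fun j => sendRound P Q (niceRun P) (stateAt P Q (niceRun P) m) m q j) :=
              funext fun j => sent_eq_of_active hactive heq j
            have e2 : (fun j => sendRound P Q r (stateAt P Q r m) m j q) =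
                (fun j => sendRound P Q (niceRun P) (stateAt P Q (niceRun P) m) m j q) :=
              funext fun j => hall j
            rw [heq, e1, e2]
          obtain ⟨p, hne⟩ := hrcvd
          by_cases hcp : Cont P Q r p m
          · rcases ih p hcp with ⟨x, hx, hxm⟩ | ⟨b, u, x, hfb, hxu, v, rest, hpath, hEa, hbnf⟩
            · -- p crashed strictly before m : blocked actual edge, new origin
              rw [Option.mem_def] at hx
              have h1 : ¬ m < x.1 := by omega
              have h2 : ¬ m = x.1 := by omega
              have hMr : msgSent P Q r p q m = none := by
                simp [msgSent, sendRound, hx, h1, h2]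
              have hMn : (msgSent P Q (niceRun P) p q m).isSome := by
                rw [hMr] at hne
                exact Option.ne_none_iff_isSome.1 (Ne.symm hne)
              exact Or.inr (origin2 hx (by omega) hMn)
            · -- extend the existing origin path
              by_cases hMn : (msgSent P Q (niceRun P) p q m).isSome
              · -- actual edge
                have hEa2 : Ea P Q (niceRun P) (p, m) (q, m+1) := ⟨hMn, rfl⟩
                refine Or.inr ⟨b, u, x, hfb, hxu, v, rest ++ [(q, m+1)], ?_, hEa, ?_⟩
                · have := isPath_append hpath
                    (Or.inr (Or.inl hEa2) : Edge P Q (niceRun P) (p, m) (q, m+1))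
                  simpa using this
                · have := bnf_append (w := (q, m+1)) hbnf hpath.2.1
                    (Or.inr (Or.inl hEa2))
                  simpa using this
              · -- null edge; its sender is not `b`
                have hMn0 : msgSent P Q (niceRun P) p q m = none :=
                  Option.not_isSome_iff_eq_none.1 hMn
                have hMr : (msgSent P Q r p q m).isSome := by
                  cases hmr : msgSent P Q r p q m with
                  | none => rw [hmr, hMn0] at hne; exact absurd rfl hne
                  | some b' => simp
                have hEn : En P Q (niceRun P) (p, m) (q, m+1) := by
                  refine ⟨⟨nice_not_blocked _ _ _, ?_, ⟨r, hMr⟩⟩, rfl⟩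
                  simp [SendsActual, hMn0]
                have hpb : p ≠ b := by
                  rintro rfl
                  have hum : u < m := path_time_lt hpath
                  have h1 : ¬ m < x.1 := by omega
                  have h2 : ¬ m = x.1 := by omega
                  have : msgSent P Q r p q m = none := by
                    simp [msgSent, sendRound, hfb, h1, h2]
                  rw [this] at hMr; simp at hMr
                refine Or.inr ⟨b, u, x, hfb, hxu, v, rest ++ [(q, m+1)], ?_, hEa, ?_⟩
                · have := isPath_append hpath
                    (Or.inr (Or.inr hEn) : Edge P Q (niceRun P) (p, m) (q, m+1))
                  simpa using this
                · have := bnf_append (w := (q, m+1)) hbnf hpath.2.1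
                    (Or.inr (Or.inr ⟨hEn, by simp [hpb]⟩))
                  simpa using this
          · -- p uncontaminated: the difference must come from p's own crash
            have heqp : stateAt P Q r m p = stateAt P Q (niceRun P) m p :=
              not_not.1 hcp
            cases hfp : r.2.fp p with
            | none =>
                exact absurd (sent_eq_of_active (by simp [hfp]) heqp q) hne
            | some x =>
                by_cases hxm : m < x.1
                · refine absurd (sent_eq_of_active ?_ heqp q) hne
                  intro y hy
                  rw [Option.mem_def, hfp, Option.some.injEq] at hy
                  subst hy; exact hxm
                · have hxle : x.1 ≤ m := Nat.not_lt.1 hxm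
                  by_cases hch : P.chan p q
                  · by_cases hmx : m = x.1
                    · by_cases hqb : q ∈ x.2
                      · have hMr : msgSent P Q r p q m = none := by
                          simp [msgSent, sendRound, hfp, hxm, hmx, hqb, hch]
                        have hMn : (msgSent P Q (niceRun P) p q m).isSome := by
                          rw [hMr] at hne
                          exact Option.ne_none_iff_isSome.1 (Ne.symm hne)
                        exact Or.inr (origin2 hfp hxle hMn)
                      · refine absurd ?_ hne
                        simp only [msgSent, sendRound, hfp, hxm, hmx, hqb, hch,
                          nice_fp, if_true, if_false]
                        rw [hmx] at heqp
                        simp [heqp, hmx]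
                    · have hMr : msgSent P Q r p q m = none := by
                        simp [msgSent, sendRound, hfp, hxm, hmx]
                      have hMn : (msgSent P Q (niceRun P) p q m).isSome := by
                        rw [hMr] at hne
                        exact Option.ne_none_iff_isSome.1 (Ne.symm hne)
                      exact Or.inr (origin2 hfp hxle hMn)
                  · refine absurd ?_ hne
                    simp [msgSent, sendRound, hch]

end Aux2

/-- **Sufficient conditions for Ordered Response.**  Let `Q` be an NbM protocol
in which `i_h` performs `a_h` at time `t_h` in a run `r` iff it is active at
`t_h` and does not know the run is not nice, and at no other time.  If `nG(Q)`
contains (1) an f-resilient message block from `⟨s,0⟩` to `θ_h` for every `h`,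
(2) for consecutive `g, x`, an (f−1)-resilient block from `θ_g⁺` to `θ_x` none
of whose paths contains a null-message edge by `i_g`, and (3) the conservative
back-up condition on failure-revealing paths, then `Q` solves the instance
`⟨v_s = 1, a_1, …, a_k⟩` of Ordered Response. -/
theorem ordered_response_sufficiency (P : Params) (Q : Protocol P Bool)
    {k : ℕ} (ip : Fin k → Fin P.N) (a : Fin k → ℕ)
    (t : Fin k → ℕ) (hmono : Monotone t)
    (hNbM : NbM P Q)
    (hact : ∀ (r : Run P) (h : Fin k) (u : ℕ),
      Performs P Q r (ip h) (a h) u ↔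
        (u = t h ∧ (∀ x ∈ r.2.fp (ip h), t h < x.1) ∧
          ¬ Kn P Q (ip h) (fun r' _ => r' ≠ niceRun P) r (t h)))
    (h1 : ∀ h : Fin k, ∃ Γ : Set (List (Node P)),
      ResBlockN P Q (niceRun P) P.f (P.s, 0) (ip h, t h) Γ)
    (h2 : ∀ g x : Fin k, (g : ℕ) + 1 = (x : ℕ) →
      ∃ Γ : Set (List (Node P)),
        ResBlockN P Q (niceRun P) (P.f - 1) (ip g, t g + 1) (ip x, t x) Γ ∧
        ∀ π ∈ Γ, BNullFree P Q (niceRun P) {ip g} π)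
    (h3 : ∀ (b : Fin P.N) (mb : ℕ) (x h : Fin k), x < h →
      ∀ B : Finset (Fin P.N), b ∈ B → B.card ≤ P.f →
      (∃ (v : Node P) (rest : List (Node P)),
        IsPath P Q (niceRun P) ((b, mb) :: v :: rest) (b, mb) (ip x, t x) ∧
        Ea P Q (niceRun P) (b, mb) v ∧
        BNullFree P Q (niceRun P) {b} ((b, mb) :: v :: rest)) →
      (¬ ∃ π : List (Node P),
        IsPath P Q (niceRun P) π (ip x, t x) (ip h, t h) ∧
        BNullFree P Q (niceRun P) (↑B) π) →
      ∃ π : List (Node P),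
        IsPath P Q (niceRun P) π (b, mb + 1) (ip h, t h) ∧
        BNullFree P Q (niceRun P) (↑B) π) :
    SolvesOR P Q ip a := by
  classical
  have hFS : ∀ r : Run P, ∀ p : Fin P.N,
      p ∉ (↑(r.2.F) : Set (Fin P.N)) → r.2.fp p = none := by
    intro r p hp
    simp only [FPat.F, Finset.coe_filter, Finset.mem_univ, true_and,
      Set.mem_setOf_eq] at hp
    exact Option.not_isSome_iff_eq_none.1 hp
  -- Part (a): if `i_h` considers the nice run possible then `v_s = 1`.
  have parta : ∀ (r : Run P) (h : Fin k),
      ¬ Cont P Q r (ip h) (t h) → r.1 = true := by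
    intro r h hnc
    by_contra hrt
    have hr' : r.1 = false := by
      cases hb : r.1
      · rfl
      · exact absurd hb hrt
    have hc0 : Cont P Q r P.s 0 := by
      intro he
      have h0 : (initVal P r.1 P.s, ([] : List (Event P Bool))) =
          (initVal P true P.s, []) := he
      rw [Prod.mk.injEq] at h0
      simp [initVal, hr'] at h0
    obtain ⟨Γ, hΓ⟩ := h1 h
    obtain ⟨π, hπΓ, hπB⟩ := hΓ.2 r.2.F r.2.card_le
    exact hnc (forwardB hNbM (hFS r) (hΓ.1 π hπΓ) hπB hc0)
  -- Predecessor step: knowledge at `θ_h` gives activity & knowledge at `θ_g`.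
  have hstep : ∀ (r : Run P) (g h : Fin k), (g:ℕ) + 1 = (h:ℕ) →
      ¬ Cont P Q r (ip h) (t h) →
      (∀ x ∈ r.2.fp (ip g), t g < x.1) ∧ ¬ Cont P Q r (ip g) (t g) := by
    intro r g h hgh hnc
    have hr := parta r h hnc
    have hactg : ∀ x ∈ r.2.fp (ip g), t g < x.1 := by
      intro x hx
      by_contra hle
      have hxle : x.1 ≤ t g := Nat.not_lt.1 hle
      rw [Option.mem_def] at hx
      have hcg1 : Cont P Q r (ip g) (t g + 1) := cont_of_frozen hx hxle
      obtain ⟨Γ, hΓ, hΓg⟩ := h2 g h hgh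
      have hgF : ip g ∈ r.2.F := by simp [FPat.F, hx]
      have hcard : ((r.2.F).erase (ip g)).card ≤ P.f - 1 := by
        rw [Finset.card_erase_of_mem hgF]
        have := r.2.card_le
        have : (r.2.F).card ≤ P.f := r.2.card_le
        omega
      obtain ⟨π, hπΓ, hπB⟩ := hΓ.2 ((r.2.F).erase (ip g)) hcard
      have hπg := hΓg π hπΓ
      have hpath := hΓ.1 π hπΓ
      have hcomb := chain'_and hπB hπg
      have hch : π.Chain' (fun u v => El P u v ∨ Ea P Q (niceRun P) u v ∨
          (En P Q (niceRun P) u v ∧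
            u.1 ∉ ((↑((r.2.F).erase (ip g)) : Set (Fin P.N)) ∪ {ip g}))) := by
        refine hcomb.imp ?_
        rintro u v ⟨hA | hA | ⟨hA, hbA⟩, hB | hB | ⟨hB, hbB⟩⟩
        · exact Or.inl hA
        · exact Or.inl hA
        · exact Or.inl hA
        · exact Or.inr (Or.inl hA)
        · exact Or.inr (Or.inl hA)
        · exact Or.inr (Or.inl hA)
        · exact Or.inl hB
        · exact Or.inr (Or.inl hB)
        · refine Or.inr (Or.inr ⟨hA, ?_⟩)
          simp only [Set.mem_union, not_or]
          exact ⟨hbA, hbB⟩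
      have hS : ∀ p : Fin P.N,
          p ∉ ((↑((r.2.F).erase (ip g)) : Set (Fin P.N)) ∪ {ip g}) →
          r.2.fp p = none := by
        intro p hp
        simp only [Set.mem_union, not_or, Set.mem_singleton_iff,
          Finset.mem_coe] at hp
        obtain ⟨hp1, hp2⟩ := hp
        apply hFS r
        intro hpF
        rw [Finset.mem_coe] at hpF
        exact hp1 (Finset.mem_erase.2 ⟨hp2, hpF⟩)
      exact hnc (forward hNbM hS π _ _ hch hpath.1 hpath.2.1 hcg1)
    refine ⟨hactg, ?_⟩
    by_contra hcg
    rcases trace (Q := Q) hr (t g) (ip g) hcg with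
      ⟨x, hx, hlt⟩ | ⟨b, u, x, hfb, hxu, v, rest, hpath, hEaO, hbnf⟩
    · exact absurd (hactg x hx) (by omega)
    · have hgh' : g < h := Fin.lt_def.2 (by omega)
      by_cases hex : ∃ π : List (Node P),
          IsPath P Q (niceRun P) π (ip g, t g) (ip h, t h) ∧
          BNullFree P Q (niceRun P) (↑r.2.F) π
      · obtain ⟨π, hπ, hπB⟩ := hex
        exact hnc (forwardB hNbM (hFS r) hπ hπB hcg)
      · have hbF : b ∈ r.2.F := by simp [FPat.F, hfb]
        obtain ⟨π, hπ, hπB⟩ := h3 b u g h hgh' r.2.F hbF r.2.card_le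
          ⟨v, rest, hpath, hEaO, hbnf⟩ hex
        have hcb : Cont P Q r b (u+1) := cont_of_frozen hfb hxu
        exact hnc (forwardB hNbM (hFS r) hπ hπB hcb)
  -- Main downward induction.
  have key : ∀ (r : Run P) (n : ℕ) (h : Fin k), (h:ℕ) = n →
      ¬ Cont P Q r (ip h) (t h) → ∀ g : Fin k, g < h →
      (∀ x ∈ r.2.fp (ip g), t g < x.1) ∧ ¬ Cont P Q r (ip g) (t g) := by
    intro r n
    induction n with
    | zero =>
        intro h hh hnc g hg
        have := Fin.lt_def.1 hg
        omega
    | succ n ihn =>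
        intro h hh hnc g hg
        have hk := h.isLt
        have hn' : n < k := by omega
        have hstep' := hstep r ⟨n, hn'⟩ h (by simp; omega) hnc
        by_cases hgn : (g:ℕ) = n
        · have : g = ⟨n, hn'⟩ := Fin.ext hgn
          rw [this]; exact hstep'
        · have hglt := Fin.lt_def.1 hg
          exact ihn ⟨n, hn'⟩ rfl hstep'.2 g (Fin.lt_def.2 (by simp; omega))
  -- Assemble.
  constructor
  · intro r h u hperf
    rw [hact] at hperf
    obtain ⟨hu, hactv, hnk⟩ := hperf
    have hnc : ¬ Cont P Q r (ip h) (t h) := fun hcont =>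
      hnk ((kn_iff_cont r (ip h) (t h)).2 hcont)
    refine ⟨parta r h hnc, ?_⟩
    intro g hg
    obtain ⟨hag, hncg⟩ := key r (h:ℕ) h rfl hnc g hg
    refine ⟨t g, ?_, ?_⟩
    · rw [hu]; exact hmono hg.le
    · rw [hact]
      exact ⟨rfl, hag, fun hK => hncg ((kn_iff_cont _ _ _).1 hK)⟩
  · intro h
    refine ⟨t h, ?_⟩
    rw [hact]
    refine ⟨rfl, ?_, kn_nice_false _ _⟩
    intro x hx
    simp [niceRun, nicePat] at hx

end NullMessages
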